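/- arXiv:1709.08941 — 7 statements merged into one kernel-verified Lean document; each statement's English description precedes it below -/
import Mathlib

section
/- Let N ≥ 2, let H : ℝ → Matrix (Fin N) (Fin N) ℂ be continuous with H(t) Hermitian for every t, and let ρ : ℝ → Matrix (Fin N) (Fin N) ℂ be differentiable with derivative ρ'(t) = −i·(H(t)ρ(t) − ρ(t)H(t)) for all t, such that ρ(t) is a density matrix for every t and tr[ρ(0)²] > 1/N. Then for every T ≥ 0 one has tr[ρ(T)²] = tr[ρ(0)²] and the quantum speed limit Θ(ρ(0), ρ(T)) ≤ ∫₀ᵀ √( 2·(Re tr[ρ(t)² H(t)²] − Re tr[(ρ(t) H(t))²]) / (Re tr[ρ(t)²] − 1/N) ) dt. -/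
open Matrix MeasureTheory ComplexOrder

noncomputable section

attribute [local instance] Matrix.normedAddCommGroup Matrix.normedSpace

/-- A density matrix: Hermitian (implied by positive semidefiniteness),
positive semidefinite, and of unit trace. -/
def IsDensityMatrix {N : ℕ} (ρ : Matrix (Fin N) (Fin N) ℂ) : Prop :=
  ρ.IsHermitian ∧ ρ.PosSemidef ∧ ρ.trace = 1

/-- The generalized Bloch angle
`Θ(ρ,σ) = arccos((Re tr[ρσ] − 1/N)/(Re tr[ρ²] − 1/N))`. -/
def Theta {N : ℕ} (ρ σ : Matrix (Fin N) (Fin N) ℂ) : ℝ :=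
  Real.arccos (((ρ * σ).trace.re - 1 / N) / ((ρ * ρ).trace.re - 1 / N))

/-! The Bloch vector `ρ - 𝟙/N`, flattened into `EuclideanSpace ℂ (Fin N × Fin N)` so that the
inner product becomes the Hilbert–Schmidt one, has squared norm `Re tr ρ² - 1/N`, and the von
Neumann equation makes its velocity `-i [H, ρ]` orthogonal to it. So it moves on a sphere, `Θ` is
the angle it sweeps out, and that angle is at most its arc length divided by the radius. The
speed is the Hilbert–Schmidt norm of `[H, ρ]`, whose square is `2 (tr ρ²H² - tr (ρH)²)`. -/

open Real InnerProductGeometry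

section SphericalArc

variable {F : Type*} [NormedAddCommGroup F] [InnerProductSpace ℝ F]

/-- Only the component of `x` orthogonal to `y`, of length `‖x‖ sin ∠(x, y)`, pairs with `v`. -/
theorem abs_inner_le_norm_mul_sin_angle_mul_norm {x y v : F} (hyv : inner ℝ y v = 0) :
    |inner ℝ x v| ≤ ‖x‖ * sin (angle x y) * ‖v‖ := by
  rcases eq_or_ne y 0 with rfl | hy
  · simpa using abs_real_inner_le_norm x v
  have hy' : ‖y‖ ≠ 0 := norm_ne_zero_iff.mpr hy
  set w := x - (inner ℝ x y / ‖y‖ ^ 2) • y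
  have hwv : inner ℝ w v = inner ℝ x v := by
    simp [w, inner_sub_left, inner_smul_left, hyv]
  have hw2 : inner ℝ x x * inner ℝ y y - inner ℝ x y * inner ℝ x y = (‖w‖ * ‖y‖) ^ 2 := by
    rw [mul_pow, norm_sub_sq_real, norm_smul, inner_smul_right, real_inner_self_eq_norm_sq,
      real_inner_self_eq_norm_sq, Real.norm_eq_abs, mul_pow, sq_abs]
    field_simp
    ring
  have hw : ‖w‖ * ‖y‖ = ‖x‖ * sin (angle x y) * ‖y‖ := by
    rw [← sqrt_sq (by positivity : 0 ≤ ‖w‖ * ‖y‖), ← hw2, ← sin_angle_mul_norm_mul_norm]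
    ring
  rw [← hwv, ← mul_right_cancel₀ hy' hw]
  exact abs_real_inner_le_norm w v

theorem mul_sqrt_one_sub_sq_le {l : ℝ} (hl0 : 0 ≤ l) (hl1 : l ≤ 1) (x : ℝ) :
    l * √(1 - x ^ 2) ≤ √(1 - (l * x) ^ 2) := calc
  l * √(1 - x ^ 2) = √(l ^ 2 * (1 - x ^ 2)) := by rw [sqrt_mul (sq_nonneg l), sqrt_sq hl0]
  _ ≤ √(1 - (l * x) ^ 2) := sqrt_le_sqrt (by nlinarith [sq_nonneg x, sq_nonneg l])

theorem arccos_sub_arccos_le_integral {u u' g : ℝ → ℝ} {a b : ℝ} (hab : a ≤ b)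
    (hu : ∀ t, HasDerivAt u (u' t) t) (hu1 : ∀ t, |u t| ≤ 1)
    (hg : IntegrableOn g (Set.Icc a b)) (hg0 : ∀ t, 0 ≤ g t)
    (hu' : ∀ t, |u' t| ≤ √(1 - u t ^ 2) * g t) :
    arccos (u b) - arccos (u a) ≤ ∫ t in a..b, g t := by
  -- `arccos` is not differentiable at `±1`, so first compare `arccos (l * u)` for `l < 1`.
  have hscaled : ∀ l ∈ Set.Ioo (0 : ℝ) 1,
      arccos (l * u b) - arccos (l * u a) ≤ ∫ t in a..b, g t := by
    rintro l ⟨hl0, hl1⟩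
    have hlu : ∀ t, |l * u t| < 1 := fun t => by
      rw [abs_mul, abs_of_pos hl0]
      nlinarith [hu1 t, abs_nonneg (u t)]
    have hderiv : ∀ t, HasDerivAt (fun s => arccos (l * u s))
        (-(1 / √(1 - (l * u t) ^ 2)) * (l * u' t)) t := fun t =>
      HasDerivAt.comp (h₂ := arccos) t
        (hasDerivAt_arccos (abs_lt.mp (hlu t)).1.ne' (abs_lt.mp (hlu t)).2.ne)
        ((hu t).const_mul l)
    refine intervalIntegral.sub_le_integral_of_hasDeriv_right_of_le hab
      (fun t _ => (hderiv t).continuousAt.continuousWithinAt)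
      (fun t _ => (hderiv t).hasDerivWithinAt) hg (fun t _ => ?_)
    have hs : 0 < √(1 - (l * u t) ^ 2) :=
      sqrt_pos.mpr (sub_pos.mpr ((sq_lt_one_iff_abs_lt_one _).mpr (hlu t)))
    calc -(1 / √(1 - (l * u t) ^ 2)) * (l * u' t)
        ≤ l * |u' t| / √(1 - (l * u t) ^ 2) := by
          rw [neg_mul, one_div_mul_eq_div, ← neg_div]
          gcongr
          nlinarith [neg_abs_le (u' t)]
      _ ≤ l * √(1 - u t ^ 2) * g t / √(1 - (l * u t) ^ 2) := by
          rw [mul_assoc]; gcongr; exact hu' t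
      _ ≤ √(1 - (l * u t) ^ 2) * g t / √(1 - (l * u t) ^ 2) := by
          gcongr
          · exact hg0 t
          · exact mul_sqrt_one_sub_sq_le hl0.le hl1.le (u t)
      _ = g t := mul_div_cancel_left₀ _ hs.ne'
  have hcont : Continuous fun l : ℝ => arccos (l * u b) - arccos (l * u a) := by fun_prop
  simpa using le_of_tendsto ((hcont.tendsto 1).mono_left nhdsWithin_le_nhds)
    (Filter.eventually_of_mem (Ioo_mem_nhdsLT zero_lt_one) hscaled)

theorem norm_eq_of_inner_deriv_eq_zero {γ γ' : ℝ → F} (hγ : ∀ t, HasDerivAt γ (γ' t) t)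
    (horth : ∀ t, inner ℝ (γ t) (γ' t) = 0) (s t : ℝ) : ‖γ s‖ = ‖γ t‖ := by
  have hsq : ∀ t, HasDerivAt (‖γ ·‖ ^ 2) 0 t := fun t => by
    simpa [horth t] using (hγ t).norm_sq
  have := is_const_of_deriv_eq_zero (fun t => (hsq t).differentiableAt)
    (fun t => (hsq t).deriv) s t
  exact (pow_left_inj₀ (norm_nonneg _) (norm_nonneg _) two_ne_zero).mp this

theorem angle_le_integral_norm_deriv_div_norm {γ γ' : ℝ → F} (hγ : ∀ t, HasDerivAt γ (γ' t) t)
    (hγ' : Continuous γ') (horth : ∀ t, inner ℝ (γ t) (γ' t) = 0) {a b : ℝ} (hab : a ≤ b)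
    (ha : γ a ≠ 0) :
    angle (γ a) (γ b) ≤ ∫ t in a..b, ‖γ' t‖ / ‖γ t‖ := by
  set R := ‖γ a‖
  have hR : 0 < R := norm_pos_iff.mpr ha
  have hnorm : ∀ t, ‖γ t‖ = R := fun t => norm_eq_of_inner_deriv_eq_zero hγ horth t a
  set u := fun t => inner ℝ (γ a) (γ t) / (R * R)
  have hangle : ∀ t, angle (γ a) (γ t) = arccos (u t) := fun t => by
    rw [angle, hnorm t]
  have hu : ∀ t, HasDerivAt u (inner ℝ (γ a) (γ' t) / (R * R)) t := fun t => by
    simpa using ((hasDerivAt_const t (γ a)).inner ℝ (hγ t)).div_const (R * R)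
  have hu1 : ∀ t, |u t| ≤ 1 := fun t => by
    simpa [hnorm t] using abs_real_inner_div_norm_mul_norm_le_one (γ a) (γ t)
  have hu' : ∀ t, |inner ℝ (γ a) (γ' t) / (R * R)| ≤ √(1 - u t ^ 2) * (‖γ' t‖ / R) := by
    intro t
    have hcs := abs_inner_le_norm_mul_sin_angle_mul_norm (x := γ a) (horth t)
    rw [hangle, sin_arccos] at hcs
    rw [abs_div, abs_of_pos (mul_pos hR hR), div_le_iff₀ (mul_pos hR hR)]
    calc |inner ℝ (γ a) (γ' t)| ≤ R * √(1 - u t ^ 2) * ‖γ' t‖ := hcs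
      _ = √(1 - u t ^ 2) * (‖γ' t‖ / R) * (R * R) := by field_simp
  have hg : IntegrableOn (fun t => ‖γ' t‖ / R) (Set.Icc a b) :=
    (hγ'.norm.div_const R).integrableOn_Icc
  have hua : u a = 1 := by
    simp only [u, real_inner_self_eq_norm_sq, sq]
    exact div_self (mul_pos hR hR).ne'
  have hint : ∫ t in a..b, ‖γ' t‖ / ‖γ t‖ = ∫ t in a..b, ‖γ' t‖ / R :=
    intervalIntegral.integral_congr fun t _ => by rw [hnorm t]
  rw [hangle b, hint]
  simpa [hua] using arccos_sub_arccos_le_integral hab hu hu1 hg (fun t => by positivity) hu'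

end SphericalArc

-- `inner ℝ` on `EuclideanSpace ℂ ι` is the `PiLp` one built from `InnerProductSpace ℝ ℂ`.
theorem EuclideanSpace.real_inner_eq_re_inner {ι : Type*} [Fintype ι] (x y : EuclideanSpace ℂ ι) :
    inner ℝ x y = (inner ℂ x y).re := by
  simp [PiLp.inner_apply, mul_comm]

namespace Matrix

variable {m n : Type*} [Fintype m] [Fintype n]

def flattenCLM : Matrix m n ℂ →L[ℂ] EuclideanSpace ℂ (m × n) :=
  LinearMap.toContinuousLinearMap
    { toFun := fun A => WithLp.toLp 2 fun p => A p.1 p.2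
      map_add' := fun _ _ => rfl
      map_smul' := fun _ _ => rfl }

@[simp]
theorem flattenCLM_apply (A : Matrix m n ℂ) (p : m × n) : flattenCLM A p = A p.1 p.2 := rfl

theorem inner_flattenCLM (A B : Matrix m n ℂ) :
    inner ℂ (flattenCLM A) (flattenCLM B) = (Aᴴ * B).trace := by
  simp only [PiLp.inner_apply, RCLike.inner_apply, trace, diag, mul_apply, conjTranspose_apply]
  rw [Fintype.sum_prod_type, Finset.sum_comm]
  simp [mul_comm]

theorem real_inner_flattenCLM (A B : Matrix m n ℂ) :
    inner ℝ (flattenCLM A) (flattenCLM B) = (Aᴴ * B).trace.re := by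
  rw [EuclideanSpace.real_inner_eq_re_inner, inner_flattenCLM]

theorem norm_flattenCLM_sq (A : Matrix m n ℂ) : ‖flattenCLM A‖ ^ 2 = (Aᴴ * A).trace.re := by
  rw [← real_inner_self_eq_norm_sq, real_inner_flattenCLM]

section Commutator

variable {R : Type*} [CommRing R] (A B : Matrix n n R)

theorem trace_commutator : (A * B - B * A).trace = 0 := by
  rw [trace_sub, trace_mul_comm, sub_self]

theorem trace_mul_commutator_self : (B * (A * B - B * A)).trace = 0 := by
  rw [mul_sub, trace_sub, ← Matrix.mul_assoc, trace_mul_cycle, Matrix.mul_assoc, sub_self]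

theorem trace_commutator_mul_commutator :
    ((B * A - A * B) * (A * B - B * A)).trace
      = 2 * ((B * B * (A * A)).trace - (B * A * (B * A)).trace) := by
  have h₁ : (B * A * (A * B)).trace = (B * B * (A * A)).trace := by
    rw [← Matrix.mul_assoc, trace_mul_comm]; simp only [Matrix.mul_assoc]
  have h₂ : (A * B * (B * A)).trace = (B * B * (A * A)).trace := by
    rw [Matrix.mul_assoc, trace_mul_comm]; simp only [Matrix.mul_assoc]
  have h₃ : (A * B * (A * B)).trace = (B * A * (B * A)).trace := by
    rw [Matrix.mul_assoc, trace_mul_comm]; simp only [Matrix.mul_assoc]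
  rw [sub_mul, mul_sub, mul_sub, trace_sub, trace_sub, trace_sub, h₁, h₂, h₃]
  ring

end Commutator

theorem norm_flattenCLM_commutator_sq {A B : Matrix n n ℂ} (hA : A.IsHermitian)
    (hB : B.IsHermitian) :
    ‖flattenCLM (A * B - B * A)‖ ^ 2
      = 2 * ((B * B * (A * A)).trace.re - (B * A * (B * A)).trace.re) := by
  rw [norm_flattenCLM_sq, conjTranspose_sub, conjTranspose_mul, conjTranspose_mul, hA.eq, hB.eq,
    trace_commutator_mul_commutator]
  simp

end Matrix

def maximallyMixed (N : ℕ) : Matrix (Fin N) (Fin N) ℂ := (N : ℂ)⁻¹ • 1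

def blochVector {N : ℕ} (ρ : Matrix (Fin N) (Fin N) ℂ) : EuclideanSpace ℂ (Fin N × Fin N) :=
  flattenCLM (ρ - maximallyMixed N)

section Bloch

variable {N : ℕ}

theorem isHermitian_maximallyMixed : (maximallyMixed N).IsHermitian := by
  simp [maximallyMixed, IsHermitian, conjTranspose_smul]

theorem trace_sub_maximallyMixed_mul_sub {A B : Matrix (Fin N) (Fin N) ℂ} (hA : A.trace = 1)
    (hB : B.trace = 1) :
    ((A - maximallyMixed N) * (B - maximallyMixed N)).trace = (A * B).trace - (N : ℂ)⁻¹ := by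
  simp only [maximallyMixed, sub_mul, mul_sub, Matrix.smul_mul, Matrix.mul_smul, Matrix.one_mul,
    Matrix.mul_one, trace_sub, trace_smul, trace_one, hA, hB, Fintype.card_fin, smul_eq_mul]
  rcases eq_or_ne (N : ℂ) 0 with hN | hN
  · simp [hN]
  · field_simp
    ring

theorem inner_blochVector {ρ σ : Matrix (Fin N) (Fin N) ℂ} (hρ : ρ.IsHermitian)
    (hρ₁ : ρ.trace = 1) (hσ₁ : σ.trace = 1) :
    inner ℂ (blochVector ρ) (blochVector σ) = (ρ * σ).trace - (N : ℂ)⁻¹ := by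
  rw [blochVector, blochVector, inner_flattenCLM, (hρ.sub isHermitian_maximallyMixed).eq,
    trace_sub_maximallyMixed_mul_sub hρ₁ hσ₁]

theorem real_inner_blochVector {ρ σ : Matrix (Fin N) (Fin N) ℂ} (hρ : ρ.IsHermitian)
    (hρ₁ : ρ.trace = 1) (hσ₁ : σ.trace = 1) :
    inner ℝ (blochVector ρ) (blochVector σ) = (ρ * σ).trace.re - 1 / N := by
  rw [EuclideanSpace.real_inner_eq_re_inner, inner_blochVector hρ hρ₁ hσ₁]
  simp

theorem norm_blochVector_sq {ρ : Matrix (Fin N) (Fin N) ℂ} (hρ : ρ.IsHermitian)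
    (hρ₁ : ρ.trace = 1) : ‖blochVector ρ‖ ^ 2 = (ρ * ρ).trace.re - 1 / N := by
  rw [← real_inner_self_eq_norm_sq, real_inner_blochVector hρ hρ₁ hρ₁]

theorem trace_mul_self_eq_norm_blochVector_sq_add {ρ : Matrix (Fin N) (Fin N) ℂ}
    (hρ : ρ.IsHermitian) (hρ₁ : ρ.trace = 1) : (ρ * ρ).trace = ((‖blochVector ρ‖ ^ 2 + 1 / N : ℝ) : ℂ) := by
  have h := inner_self_eq_norm_sq_to_K (𝕜 := ℂ) (blochVector ρ)
  rw [inner_blochVector hρ hρ₁ hρ₁] at h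
  push_cast
  linear_combination h

theorem theta_eq_angle_blochVector {ρ σ : Matrix (Fin N) (Fin N) ℂ} (hρ : ρ.IsHermitian)
    (hρ₁ : ρ.trace = 1) (hσ₁ : σ.trace = 1) (h : ‖blochVector ρ‖ = ‖blochVector σ‖) :
    Theta ρ σ = angle (blochVector ρ) (blochVector σ) := by
  rw [Theta, angle, real_inner_blochVector hρ hρ₁ hσ₁, ← h, ← norm_blochVector_sq hρ hρ₁, sq]

theorem real_inner_blochVector_smul_commutator {ρ : Matrix (Fin N) (Fin N) ℂ}
    (hρ : ρ.IsHermitian) (c : ℂ) (A : Matrix (Fin N) (Fin N) ℂ) :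
    inner ℝ (blochVector ρ) (flattenCLM (c • (A * ρ - ρ * A))) = 0 := by
  rw [blochVector, real_inner_flattenCLM, (hρ.sub isHermitian_maximallyMixed).eq, Matrix.mul_smul,
    sub_mul, trace_smul, trace_sub, trace_mul_commutator_self, maximallyMixed, smul_mul,
    Matrix.one_mul, trace_smul, trace_commutator]
  simp

theorem hasDerivAt_blochVector {ρ : ℝ → Matrix (Fin N) (Fin N) ℂ} {ρ' : Matrix (Fin N) (Fin N) ℂ}
    {t : ℝ} (h : HasDerivAt ρ ρ' t) :
    HasDerivAt (fun s => blochVector (ρ s)) (flattenCLM ρ') t := by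
  exact (flattenCLM.restrictScalars ℝ).hasFDerivAt.comp_hasDerivAt t (h.sub_const _)

end Bloch

theorem qsl_generalized_bloch_angle_general (N : ℕ)
    (H : ℝ → Matrix (Fin N) (Fin N) ℂ) (hHcont : Continuous H)
    (hHherm : ∀ t, (H t).IsHermitian)
    (ρ : ℝ → Matrix (Fin N) (Fin N) ℂ)
    (hderiv : ∀ t, HasDerivAt ρ ((-Complex.I) • (H t * ρ t - ρ t * H t)) t)
    (hdens : ∀ t, IsDensityMatrix (ρ t))
    (hpur : 1 / (N : ℝ) < (ρ 0 * ρ 0).trace.re)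
    (T : ℝ) (hT : 0 ≤ T) :
    (ρ T * ρ T).trace = (ρ 0 * ρ 0).trace ∧
    Theta (ρ 0) (ρ T) ≤ ∫ t in (0:ℝ)..T,
      Real.sqrt (2 * ((ρ t * ρ t * (H t * H t)).trace.re
          - (ρ t * H t * (ρ t * H t)).trace.re) /
        ((ρ t * ρ t).trace.re - 1 / (N : ℝ))) := by
  have hherm t : (ρ t).IsHermitian := (hdens t).1
  have htr t : (ρ t).trace = 1 := (hdens t).2.2
  have hγ t := hasDerivAt_blochVector (hderiv t)
  have horth t := real_inner_blochVector_smul_commutator (hherm t) (-Complex.I) (H t)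
  have hnorm t := norm_eq_of_inner_deriv_eq_zero hγ horth t 0
  refine ⟨?_, ?_⟩
  · rw [trace_mul_self_eq_norm_blochVector_sq_add (hherm T) (htr T),
      trace_mul_self_eq_norm_blochVector_sq_add (hherm 0) (htr 0), hnorm T]
  · have hρcont : Continuous ρ :=
      continuous_iff_continuousAt.mpr fun t => (hderiv t).continuousAt
    have hγ' : Continuous fun t => flattenCLM ((-Complex.I) • (H t * ρ t - ρ t * H t)) :=
      flattenCLM.continuous.comp
        (((hHcont.matrix_mul hρcont).sub (hρcont.matrix_mul hHcont)).fun_const_smul _)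
    have h0 : blochVector (ρ 0) ≠ 0 := fun h => by
      have := norm_blochVector_sq (hherm 0) (htr 0)
      rw [h, norm_zero] at this
      linarith
    rw [theta_eq_angle_blochVector (hherm 0) (htr 0) (htr T) (hnorm T).symm]
    refine (angle_le_integral_norm_deriv_div_norm hγ hγ' horth hT h0).trans_eq
      (intervalIntegral.integral_congr fun t _ => ?_)
    rw [← norm_blochVector_sq (hherm t) (htr t),
      ← norm_flattenCLM_commutator_sq (hHherm t) (hherm t), ← div_pow, sqrt_sq (by positivity),
      map_smul, norm_smul, norm_neg, Complex.norm_I, one_mul]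

theorem qsl_generalized_bloch_angle (N : ℕ) (hN : 2 ≤ N)
    (H : ℝ → Matrix (Fin N) (Fin N) ℂ) (hHcont : Continuous H)
    (hHherm : ∀ t, (H t).IsHermitian)
    (ρ : ℝ → Matrix (Fin N) (Fin N) ℂ)
    (hderiv : ∀ t, HasDerivAt ρ ((-Complex.I) • (H t * ρ t - ρ t * H t)) t)
    (hdens : ∀ t, IsDensityMatrix (ρ t))
    (hpur : 1 / (N : ℝ) < (ρ 0 * ρ 0).trace.re)
    (T : ℝ) (hT : 0 ≤ T) :
    (ρ T * ρ T).trace = (ρ 0 * ρ 0).trace ∧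
    Theta (ρ 0) (ρ T) ≤ ∫ t in (0:ℝ)..T,
      Real.sqrt (2 * ((ρ t * ρ t * (H t * H t)).trace.re
          - (ρ t * H t * (ρ t * H t)).trace.re) /
        ((ρ t * ρ t).trace.re - 1 / (N : ℝ))) :=
  qsl_generalized_bloch_angle_general N H hHcont hHherm ρ hderiv hdens hpur T hT
end
end

section
/- Let ρ and σ be density matrices on ℂ^N that are unitarily equivalent, i.e. σ = UρU† for some unitary N×N matrix U. Then 2/N − Re tr[ρ²] ≤ Re tr[ρσ] ≤ Re tr[ρ²]. Consequently, when tr[ρ²] > 1/N, the quantity (Re tr[ρσ] − 1/N)/(Re tr[ρ²] − 1/N) lies in [−1, 1]. -/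
open Matrix ComplexOrder

noncomputable section

lemma trace_sq_re_nonneg {N : ℕ} (M : Matrix (Fin N) (Fin N) ℂ)
    (hM : Mᴴ = M) : 0 ≤ (M * M).trace.re := by
  have h : (Mᴴ * M).trace = ∑ j, ∑ i, (Complex.normSq (M i j) : ℂ) := by
    simp [Matrix.trace, Matrix.mul_apply, Matrix.diag, Matrix.conjTranspose_apply,
      Complex.normSq_eq_conj_mul_self]
  rw [hM] at h
  rw [h]
  simp only [Complex.re_sum, Complex.ofReal_re]
  exact Finset.sum_nonneg fun j _ => Finset.sum_nonneg fun i _ => Complex.normSq_nonneg _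

theorem bloch_angle_well_defined (N : ℕ)
    (ρ σ U : Matrix (Fin N) (Fin N) ℂ)
    (hρ : IsDensityMatrix ρ) (hσ : IsDensityMatrix σ)
    (hU : U * Uᴴ = 1) (hU' : Uᴴ * U = 1)
    (hσρ : σ = U * ρ * Uᴴ) :
    (2 / (N : ℝ) - (ρ * ρ).trace.re ≤ (ρ * σ).trace.re ∧
      (ρ * σ).trace.re ≤ (ρ * ρ).trace.re) ∧
    (1 / (N : ℝ) < (ρ * ρ).trace.re →
      ((ρ * σ).trace.re - 1 / (N : ℝ)) / ((ρ * ρ).trace.re - 1 / (N : ℝ))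
        ∈ Set.Icc (-1 : ℝ) 1) := by
  have hN : (0:ℝ) < N := by
    rcases Nat.eq_zero_or_pos N with h | h
    · exfalso; subst h
      have := hρ.2.2
      simp [Matrix.trace] at this
    · exact_mod_cast h
  -- tr σσ = tr ρρ
  have hσσ : (σ * σ).trace = (ρ * ρ).trace := by
    have e : σ * σ = U * (ρ * ρ) * Uᴴ := by
      subst hσρ
      calc U * ρ * Uᴴ * (U * ρ * Uᴴ) = U * ρ * (Uᴴ * U) * ρ * Uᴴ := by
            noncomm_ring
        _ = U * (ρ * ρ) * Uᴴ := by rw [hU']; noncomm_ring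
    rw [e, Matrix.trace_mul_cycle, ← Matrix.mul_assoc, hU', Matrix.one_mul]
  have hcomm : (σ * ρ).trace = (ρ * σ).trace := Matrix.trace_mul_comm σ ρ
  -- upper bound: tr (ρ-σ)² ≥ 0
  have hDH : (ρ - σ)ᴴ = ρ - σ := by
    rw [Matrix.conjTranspose_sub, hρ.1, hσ.1]
  have h1 := trace_sq_re_nonneg (ρ - σ) hDH
  have e1 : ((ρ - σ) * (ρ - σ)).trace
      = (ρ * ρ).trace - 2 * (ρ * σ).trace + (ρ * ρ).trace := by
    simp only [Matrix.sub_mul, Matrix.mul_sub, Matrix.trace_sub, hσσ, hcomm]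
    ring
  rw [e1] at h1
  simp only [Complex.add_re, Complex.sub_re, Complex.mul_re, Complex.re_ofNat,
    Complex.im_ofNat] at h1
  -- lower bound: tr (N(ρ+σ) - 2·1)² ≥ 0
  have hSH : ((N:ℂ) • (ρ + σ) - (2:ℂ) • 1)ᴴ = (N:ℂ) • (ρ + σ) - (2:ℂ) • 1 := by
    rw [Matrix.conjTranspose_sub, Matrix.conjTranspose_smul, Matrix.conjTranspose_smul,
      Matrix.conjTranspose_add, hρ.1, hσ.1, Matrix.conjTranspose_one]
    norm_num
  have h2 := trace_sq_re_nonneg _ hSH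
  have e2 : (((N:ℂ) • (ρ + σ) - (2:ℂ) • 1) * ((N:ℂ) • (ρ + σ) - (2:ℂ) • 1)).trace
      = (N:ℂ)^2 * (2 * (ρ * ρ).trace + 2 * (ρ * σ).trace) - 4 * (N:ℂ) := by
    have tr1 : (1 : Matrix (Fin N) (Fin N) ℂ).trace = (N:ℂ) := by
      simp [Matrix.trace_one]
    simp only [Matrix.sub_mul, Matrix.mul_sub, Matrix.smul_mul, Matrix.mul_smul,
      Matrix.add_mul, Matrix.mul_add, Matrix.one_mul, Matrix.mul_one,
      Matrix.trace_sub, Matrix.trace_add, Matrix.trace_smul, smul_smul,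
      smul_eq_mul, hσσ, hcomm, hρ.2.2, hσ.2.2, tr1]
    ring
  rw [e2] at h2
  have hx := h2
  simp only [Complex.sub_re, Complex.mul_re, Complex.add_re, Complex.mul_im, Complex.add_im,
    Complex.re_ofNat, Complex.im_ofNat, Complex.natCast_re, Complex.natCast_im, sq] at hx
  set t := (ρ * ρ).trace.re
  set x := (ρ * σ).trace.re
  have hA : x ≤ t := by linarith
  have hB : 2 / (N:ℝ) - t ≤ x := by
    have h2N : 2 ≤ (t + x) * N := by nlinarith [hx, hN]
    have : 2 / (N:ℝ) ≤ t + x := by rw [div_le_iff₀ hN]; linarith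
    linarith
  refine ⟨⟨hB, hA⟩, fun h => ?_⟩
  have h21 : 2 / (N:ℝ) = 2 * (1 / N) := by ring
  have hd : 0 < t - 1 / (N:ℝ) := by linarith
  constructor
  · rw [le_div_iff₀ hd]; linarith
  · rw [div_le_one hd]; linarith

end
end

section
/- Let ρ be a density matrix on ℂ^N and H a Hermitian N×N complex matrix. Then Re tr[ρ² H²] − Re tr[(ρH)²] ≤ Re tr[ρ H²] − (Re tr[ρH])², i.e. √(tr[ρ²H² − (ρH)²]) ≤ ΔE, where ΔE is the standard deviation of H in the state ρ. -/
open Matrix ComplexOrder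

/-!
Replacing `H` by `A = H - t` with the real number `t = Re tr[ρH]` changes neither side: the left
side depends on `H` only through the commutator `[ρ, H]`, and the right side becomes
`Re tr[ρA²]`. Now `tr[(ρA)²] = tr[ρ · AρA]` is the trace of a product of two positive
semidefinite matrices, hence nonnegative, and the spectrum of a density matrix lies in `[0, 1]`,
so `ρ² ≤ ρ` and `tr[ρ²A²] ≤ tr[ρA²]`.
-/

namespace Matrix

section PosSemidef

variable {𝕜 n : Type*} [RCLike 𝕜] [Fintype n]

open scoped MatrixOrder

theorem PosSemidef.trace_mul_nonneg {P Q : Matrix n n 𝕜} (hP : P.PosSemidef)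
    (hQ : Q.PosSemidef) : 0 ≤ (P * Q).trace := by
  classical
  obtain ⟨B, rfl⟩ := CStarAlgebra.nonneg_iff_eq_star_mul_self.mp hP.nonneg
  rw [star_eq_conjTranspose, Matrix.mul_assoc, trace_mul_comm]
  exact (hQ.mul_mul_conjTranspose_same B).trace_nonneg

theorem PosSemidef.trace_mul_mul_mul_nonneg {P A : Matrix n n 𝕜} (hP : P.PosSemidef)
    (hA : A.IsHermitian) : 0 ≤ (P * A * (P * A)).trace := by
  rw [Matrix.mul_assoc, ← Matrix.mul_assoc A]
  exact hP.trace_mul_nonneg (by simpa only [hA.eq] using hP.conjTranspose_mul_mul_same A)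

theorem trace_mul_le_trace_mul_of_le {P P' Q : Matrix n n 𝕜} (hP : P ≤ P')
    (hQ : Q.PosSemidef) : (P * Q).trace ≤ (P' * Q).trace := by
  rw [← sub_nonneg, ← trace_sub, ← Matrix.sub_mul]
  exact PosSemidef.trace_mul_nonneg hP hQ

theorem PosSemidef.eigenvalues_le_re_trace [DecidableEq n] {A : Matrix n n 𝕜}
    (hA : A.PosSemidef) (i : n) : hA.isHermitian.eigenvalues i ≤ RCLike.re A.trace := by
  rw [hA.isHermitian.trace_eq_sum_eigenvalues, map_sum]
  simp only [RCLike.ofReal_re]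
  exact Finset.single_le_sum (fun j _ => hA.eigenvalues_nonneg j) (Finset.mem_univ i)

theorem PosSemidef.mul_self_le_of_trace_eq_one [DecidableEq n] {A : Matrix n n 𝕜}
    (hA : A.PosSemidef) (h : A.trace = 1) : A * A ≤ A := by
  have hspec : ∀ x ∈ spectrum ℝ A, 0 ≤ x ∧ x ≤ 1 := by
    rintro x hx
    obtain ⟨i, rfl⟩ := hA.isHermitian.spectrum_real_eq_range_eigenvalues ▸ hx
    exact ⟨hA.eigenvalues_nonneg i, by simpa [h] using hA.eigenvalues_le_re_trace i⟩
  rw [← cfc_id' ℝ A, ← cfc_mul .., cfc_le_iff ..]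
  intro x hx
  nlinarith [hspec x hx]

end PosSemidef

theorem trace_mul_sub_smul_one_mul_self {R n : Type*} [CommRing R] [Fintype n] [DecidableEq n]
    (ρ H : Matrix n n R) (t : R) :
    (ρ * ((H - t • 1) * (H - t • 1))).trace =
      (ρ * (H * H)).trace - 2 * t * (ρ * H).trace + t ^ 2 * ρ.trace := by
  simp only [Matrix.sub_mul, Matrix.mul_sub, Matrix.smul_mul, Matrix.mul_smul, Matrix.mul_one,
    Matrix.one_mul, trace_sub, trace_smul, smul_eq_mul]
  ring

theorem trace_mul_self_mul_mul_self_sub_smul_one {R n : Type*} [CommRing R] [Fintype n]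
    [DecidableEq n] (ρ H : Matrix n n R) (t : R) :
    (ρ * ρ * ((H - t • 1) * (H - t • 1))).trace -
        (ρ * (H - t • 1) * (ρ * (H - t • 1))).trace =
      (ρ * ρ * (H * H)).trace - (ρ * H * (ρ * H)).trace := by
  have hcycle : (ρ * H * ρ).trace = (ρ * ρ * H).trace := by
    rw [trace_mul_comm, ← Matrix.mul_assoc]
  simp only [Matrix.sub_mul, Matrix.mul_sub, Matrix.smul_mul, Matrix.mul_smul, Matrix.mul_one,
    Matrix.one_mul, trace_sub, trace_smul, smul_eq_mul, ← Matrix.mul_assoc, hcycle]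
  ring

end Matrix

theorem Q_le_variance (N : ℕ)
    (ρ H : Matrix (Fin N) (Fin N) ℂ)
    (hρ : IsDensityMatrix ρ) (hH : H.IsHermitian) :
    (ρ * ρ * (H * H)).trace.re - (ρ * H * (ρ * H)).trace.re ≤
      (ρ * (H * H)).trace.re - ((ρ * H).trace.re) ^ 2 := by
  obtain ⟨-, hρ_psd, hρ_tr⟩ := hρ
  set t := (ρ * H).trace.re
  set A := H - (t : ℂ) • 1
  have hA : A.IsHermitian := hH.sub (isHermitian_one.smul (Complex.conj_ofReal t))
  have hQ : (ρ * ρ * (H * H)).trace.re - (ρ * H * (ρ * H)).trace.re =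
      (ρ * ρ * (A * A)).trace.re - (ρ * A * (ρ * A)).trace.re := by
    rw [← Complex.sub_re, ← Complex.sub_re, trace_mul_self_mul_mul_self_sub_smul_one]
  have hVar : (ρ * (A * A)).trace.re = (ρ * (H * H)).trace.re - t ^ 2 := by
    rw [trace_mul_sub_smul_one_mul_self, hρ_tr, mul_one, ← Complex.ofReal_pow,
      ← Complex.ofReal_ofNat 2, ← Complex.ofReal_mul, Complex.add_re, Complex.sub_re,
      Complex.re_ofReal_mul, Complex.ofReal_re]
    ring
  have hAA : (A * A).PosSemidef := by
    simpa only [hA.eq] using posSemidef_conjTranspose_mul_self A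
  have hρA : 0 ≤ (ρ * A * (ρ * A)).trace.re :=
    (Complex.nonneg_iff.mp (hρ_psd.trace_mul_mul_mul_nonneg hA)).1
  have hρρ : (ρ * ρ * (A * A)).trace.re ≤ (ρ * (A * A)).trace.re :=
    Complex.re_le_re <|
      trace_mul_le_trace_mul_of_le (hρ_psd.mul_self_le_of_trace_eq_one hρ_tr) hAA
  rw [hQ]
  linarith
end

section
/- Fix λ ∈ [0,1] with λ ≠ 1/2, θ ∈ [0, π/2], φ ∈ ℝ, and set k = 1 − 2λ. Let ρ = diag(λ, 1−λ), let s₁ = (cos θ, e^{iφ} sin θ), s₂ = (−e^{−iφ} sin θ, cos θ) in ℂ², and σ = λ s₁s₁† + (1−λ) s₂s₂†. Let H be the 2×2 Hermitian matrix with H₁₁ = H₂₂ = 0, H₁₂ = e^{iφ}, H₂₁ = e^{−iφ}. Then: (i) Θ(ρ, σ) = 2θ; (ii) Q_Θ := √( 2·(Re tr[ρ²H²] − Re tr[(ρH)²]) / (Re tr[ρ²] − 1/2) ) = 2; hence the speed-limit time T_Θ = Θ(ρ,σ)/Q_Θ equals θ. -/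
open Matrix

noncomputable section

theorem qubit_theta_bound_attained (l θ φ : ℝ)
    (hl : l ∈ Set.Icc (0 : ℝ) 1) (hl' : l ≠ 1 / 2)
    (hθ : θ ∈ Set.Icc (0 : ℝ) (Real.pi / 2))
    (ρ σ H : Matrix (Fin 2) (Fin 2) ℂ)
    (s₁ s₂ : Fin 2 → ℂ)
    (hs₁ : s₁ = ![(Real.cos θ : ℂ), Complex.exp (Complex.I * φ) * Real.sin θ])
    (hs₂ : s₂ = ![-(Complex.exp (-(Complex.I * φ))) * Real.sin θ, (Real.cos θ : ℂ)])
    (hρ : ρ = !![(l : ℂ), 0; 0, ((1 - l : ℝ) : ℂ)])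
    (hσ : σ = (l : ℂ) • vecMulVec s₁ (star s₁)
        + ((1 - l : ℝ) : ℂ) • vecMulVec s₂ (star s₂))
    (hH : H = !![0, Complex.exp (Complex.I * φ); Complex.exp (-(Complex.I * φ)), 0]) :
    Theta ρ σ = 2 * θ ∧
    Real.sqrt (2 * ((ρ * ρ * (H * H)).trace.re - (ρ * H * (ρ * H)).trace.re) /
        ((ρ * ρ).trace.re - 1 / 2)) = 2 ∧
    Theta ρ σ / Real.sqrt (2 * ((ρ * ρ * (H * H)).trace.re
        - (ρ * H * (ρ * H)).trace.re) / ((ρ * ρ).trace.re - 1 / 2)) = θ := by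
  have e1 : Complex.exp (Complex.I * φ) * Complex.exp (-(Complex.I * φ)) = 1 := by
    rw [← Complex.exp_add]; ring_nf; exact Complex.exp_zero
  have c1 : (starRingEnd ℂ) (Complex.exp (Complex.I * φ)) = Complex.exp (-(Complex.I * φ)) := by
    rw [← Complex.exp_conj]; congr 1; simp
  have c2 : (starRingEnd ℂ) (Complex.exp (-(Complex.I * φ))) = Complex.exp (Complex.I * φ) := by
    rw [← Complex.exp_conj]; congr 1; simp
  have hA : (ρ * σ).trace
      = (((l^2+(1-l)^2) * Real.cos θ^2 + 2*l*(1-l) * Real.sin θ^2 : ℝ) : ℂ) := by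
    subst hρ hσ hs₁ hs₂
    simp only [Matrix.trace_fin_two, Matrix.mul_apply, Fin.sum_univ_two, vecMulVec_apply,
      Pi.star_apply, Matrix.cons_val_zero, Matrix.cons_val_one, Matrix.head_cons,
      Matrix.add_apply, Matrix.smul_apply, Matrix.of_apply, Matrix.cons_val', Matrix.empty_val',
      Matrix.cons_val_fin_one, Matrix.head_fin_const, RCLike.star_def, smul_eq_mul,
      _root_.map_mul, _root_.map_neg, c1, c2, Complex.conj_ofReal]
    push_cast
    simp only [← Complex.ofReal_sin, ← Complex.ofReal_cos]
    linear_combination (2*l*(1-l)*(Real.sin θ:ℂ)^2) * e1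
  have hB : (ρ * ρ).trace = ((l^2+(1-l)^2 : ℝ) : ℂ) := by
    subst hρ
    simp only [Matrix.trace_fin_two, Matrix.mul_apply, Fin.sum_univ_two,
      Matrix.cons_val_zero, Matrix.cons_val_one, Matrix.head_cons,
      Matrix.of_apply, Matrix.cons_val', Matrix.empty_val', Matrix.cons_val_fin_one,
      Matrix.head_fin_const]
    push_cast
    ring
  have hC : (ρ * ρ * (H * H)).trace = ((l^2+(1-l)^2 : ℝ) : ℂ) := by
    subst hρ hH
    simp only [Matrix.trace_fin_two, Matrix.mul_apply, Fin.sum_univ_two,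
      Matrix.cons_val_zero, Matrix.cons_val_one, Matrix.head_cons,
      Matrix.of_apply, Matrix.cons_val', Matrix.empty_val', Matrix.cons_val_fin_one,
      Matrix.head_fin_const]
    push_cast
    linear_combination ((l:ℂ)^2 + (1-(l:ℂ))^2) * e1
  have hD : (ρ * H * (ρ * H)).trace = ((2*l*(1-l) : ℝ) : ℂ) := by
    subst hρ hH
    simp only [Matrix.trace_fin_two, Matrix.mul_apply, Fin.sum_univ_two,
      Matrix.cons_val_zero, Matrix.cons_val_one, Matrix.head_cons,
      Matrix.of_apply, Matrix.cons_val', Matrix.empty_val', Matrix.cons_val_fin_one,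
      Matrix.head_fin_const]
    push_cast
    linear_combination (2*(l:ℂ)*(1-(l:ℂ))) * e1
  have hk : (1 - 2*l) ≠ 0 := by
    intro h; apply hl'; linarith
  have hk2 : (1 - 2*l)^2 > 0 := by positivity
  have hden : (l^2+(1-l)^2) - 1/2 = (1-2*l)^2/2 := by ring
  have hTheta : Theta ρ σ = 2 * θ := by
    unfold Theta
    simp only [hA, hB, Complex.ofReal_re, Nat.cast_ofNat]
    have : ((l^2+(1-l)^2) * Real.cos θ^2 + 2*l*(1-l) * Real.sin θ^2 - 1/2)
        / ((l^2+(1-l)^2) - 1/2) = Real.cos (2*θ) := by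
      rw [Real.cos_two_mul, Real.sin_sq, hden, div_eq_iff (by positivity)]
      ring
    rw [this, Real.arccos_cos (by linarith [hθ.1]) (by linarith [hθ.2])]
  have hQ : Real.sqrt (2 * ((ρ * ρ * (H * H)).trace.re - (ρ * H * (ρ * H)).trace.re) /
      ((ρ * ρ).trace.re - 1 / 2)) = 2 := by
    simp only [hB, hC, hD, Complex.ofReal_re]
    have : 2 * ((l^2+(1-l)^2) - 2*l*(1-l)) / ((l^2+(1-l)^2) - 1/2) = 4 := by
      rw [hden]
      have h2 : (l^2+(1-l)^2) - 2*l*(1-l) = (1-2*l)^2 := by ring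
      rw [h2]
      field_simp
      ring
    rw [this]
    rw [show (4:ℝ) = 2^2 by norm_num, Real.sqrt_sq (by norm_num)]
  refine ⟨hTheta, hQ, ?_⟩
  rw [hTheta, hQ]
  ring
end
end

section
/- Fix λ ∈ [0,1], θ ∈ [0, π/2], φ ∈ ℝ. Let ρ = diag(λ, 1−λ), let s₁ = (cos θ, e^{iφ} sin θ), s₂ = (−e^{−iφ} sin θ, cos θ) in ℂ², and σ = λ s₁s₁† + (1−λ) s₂s₂†. Let H be the 2×2 Hermitian matrix with H₁₁ = H₂₂ = 0, H₁₂ = −i e^{−iφ}, H₂₁ = i e^{iφ}. Then exp(−iθH) ρ exp(iθH) = σ, i.e. the unitary evolution generated by H drives ρ to σ in time θ; since Θ(ρ,σ)/Q_Θ = θ for this family, the speed limit T_Θ is attained for mixed qubit states. -/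
open Matrix

noncomputable section

/-!
Since `H² = 1`, the exponential series splits into its even and odd parts, giving
`exp (z • H) = cosh z • 1 + sinh z • H`; for `z = -iθ` this is the unitary `U` whose columns are
`s₁` and `s₂`. As `H` is Hermitian, `exp (iθ • H) = Uᴴ`, and `U diag(λ, 1 - λ) Uᴴ` is the
spectral sum `λ s₁s₁† + (1 - λ) s₂s₂†`.
-/

open NormedSpace

theorem exp_smul_eq_cosh_add_sinh_of_mul_self_eq_one {A : Type*} [NormedRing A]
    [NormedAlgebra ℂ A] [CompleteSpace A] {a : A} (ha : a * a = 1) (z : ℂ) :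
    exp (z • a) = Complex.cosh z • 1 + Complex.sinh z • a := by
  have h_even (n : ℕ) : a ^ (2 * n) = 1 := by rw [pow_mul, sq, ha, one_pow]
  refine (exp_series_hasSum_exp' (𝕂 := ℂ) (z • a)).unique (HasSum.even_add_odd ?_ ?_)
  · convert (Complex.hasSum_cosh z).smul_const (1 : A) using 2 with n
    rw [smul_pow, h_even, smul_smul, inv_mul_eq_div]
  · convert (Complex.hasSum_sinh z).smul_const a using 2 with n
    rw [smul_pow, pow_succ a, h_even, one_mul, smul_smul, inv_mul_eq_div]

theorem Matrix.exp_smul_eq_cosh_add_sinh_of_mul_self_eq_one {n : Type*} [Fintype n]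
    [DecidableEq n] {H : Matrix n n ℂ} (hH : H * H = 1) (z : ℂ) :
    exp (z • H) = Complex.cosh z • 1 + Complex.sinh z • H :=
  open scoped Norms.Operator in _root_.exp_smul_eq_cosh_add_sinh_of_mul_self_eq_one hH z

theorem Matrix.mul_diagonal_mul_conjTranspose {m n α : Type*} [Fintype n] [DecidableEq n]
    [CommSemiring α] [StarRing α] (V : Matrix m n α) (d : n → α) :
    V * diagonal d * Vᴴ = ∑ j, d j • vecMulVec (fun i => V i j) (star fun i => V i j) := by
  ext i k
  rw [mul_apply]
  simp only [mul_diagonal, conjTranspose_apply, sum_apply, smul_apply, vecMulVec_apply,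
    Pi.star_apply, smul_eq_mul]
  exact Finset.sum_congr rfl fun j _ => by ring

def qubitHamiltonian (φ : ℝ) : Matrix (Fin 2) (Fin 2) ℂ :=
  !![0, -Complex.I * Complex.exp (-(Complex.I * φ)); Complex.I * Complex.exp (Complex.I * φ), 0]

theorem qubitHamiltonian_mul_self (φ : ℝ) : qubitHamiltonian φ * qubitHamiltonian φ = 1 := by
  rw [qubitHamiltonian, mul_fin_two, one_fin_two]
  simp [mul_mul_mul_comm _ (Complex.exp _), ← Complex.exp_add]

theorem isHermitian_qubitHamiltonian (φ : ℝ) : (qubitHamiltonian φ).IsHermitian := by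
  ext i j
  fin_cases i <;> fin_cases j <;> simp [qubitHamiltonian, ← Complex.exp_conj]

theorem exp_smul_qubitHamiltonian (θ φ : ℝ) :
    exp ((-(Complex.I * θ)) • qubitHamiltonian φ) =
      !![(Real.cos θ : ℂ), -Complex.exp (-(Complex.I * φ)) * Real.sin θ;
        Complex.exp (Complex.I * φ) * Real.sin θ, (Real.cos θ : ℂ)] := by
  rw [Matrix.exp_smul_eq_cosh_add_sinh_of_mul_self_eq_one (qubitHamiltonian_mul_self φ),
    mul_comm, Complex.cosh_neg, Complex.sinh_neg, Complex.cosh_mul_I, Complex.sinh_mul_I]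
  ext i j
  fin_cases i <;> fin_cases j <;> simp [qubitHamiltonian] <;> ring_nf <;> simp

theorem qubit_theta_bound_attainability_general (l θ φ : ℝ)
    (ρ σ H : Matrix (Fin 2) (Fin 2) ℂ)
    (s₁ s₂ : Fin 2 → ℂ)
    (hs₁ : s₁ = ![(Real.cos θ : ℂ), Complex.exp (Complex.I * φ) * Real.sin θ])
    (hs₂ : s₂ = ![-(Complex.exp (-(Complex.I * φ))) * Real.sin θ, (Real.cos θ : ℂ)])
    (hρ : ρ = !![(l : ℂ), 0; 0, ((1 - l : ℝ) : ℂ)])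
    (hσ : σ = (l : ℂ) • vecMulVec s₁ (star s₁)
        + ((1 - l : ℝ) : ℂ) • vecMulVec s₂ (star s₂))
    (hH : H = !![0, -Complex.I * Complex.exp (-(Complex.I * φ));
                 Complex.I * Complex.exp (Complex.I * φ), 0]) :
    NormedSpace.exp ((-(Complex.I * (θ : ℂ))) • H) * ρ *
      NormedSpace.exp ((Complex.I * (θ : ℂ)) • H) = σ := by
  obtain rfl : H = qubitHamiltonian φ := hH
  have h_exp_conjTranspose : exp ((Complex.I * (θ : ℂ)) • qubitHamiltonian φ) =
      (exp ((-(Complex.I * (θ : ℂ))) • qubitHamiltonian φ))ᴴ := by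
    rw [← exp_conjTranspose, conjTranspose_smul, (isHermitian_qubitHamiltonian φ).eq]
    simp
  have h_columns : exp ((-(Complex.I * (θ : ℂ))) • qubitHamiltonian φ) = (of ![s₁, s₂])ᵀ := by
    rw [exp_smul_qubitHamiltonian, hs₁, hs₂]
    ext i j
    fin_cases i <;> fin_cases j <;> rfl
  rw [h_exp_conjTranspose, hρ, ← diagonal_vec2, mul_diagonal_mul_conjTranspose, Fin.sum_univ_two,
    h_columns, hσ]
  rfl

theorem qubit_theta_bound_attainability (l θ φ : ℝ)
    (hl : l ∈ Set.Icc (0 : ℝ) 1)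
    (hθ : θ ∈ Set.Icc (0 : ℝ) (Real.pi / 2))
    (ρ σ H : Matrix (Fin 2) (Fin 2) ℂ)
    (s₁ s₂ : Fin 2 → ℂ)
    (hs₁ : s₁ = ![(Real.cos θ : ℂ), Complex.exp (Complex.I * φ) * Real.sin θ])
    (hs₂ : s₂ = ![-(Complex.exp (-(Complex.I * φ))) * Real.sin θ, (Real.cos θ : ℂ)])
    (hρ : ρ = !![(l : ℂ), 0; 0, ((1 - l : ℝ) : ℂ)])
    (hσ : σ = (l : ℂ) • vecMulVec s₁ (star s₁)
        + ((1 - l : ℝ) : ℂ) • vecMulVec s₂ (star s₂))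
    (hH : H = !![0, -Complex.I * Complex.exp (-(Complex.I * φ));
                 Complex.I * Complex.exp (Complex.I * φ), 0]) :
    NormedSpace.exp ((-(Complex.I * (θ : ℂ))) • H) * ρ *
      NormedSpace.exp ((Complex.I * (θ : ℂ)) • H) = σ :=
  qubit_theta_bound_attainability_general l θ φ ρ σ H s₁ s₂ hs₁ hs₂ hρ hσ hH
end
end

section
/- Fix λ ∈ [0,1], θ ∈ [0, π/2], φ ∈ ℝ, and set k = 1 − 2λ. Let ρ = diag(λ, 1−λ), let s₁ = (cos θ, e^{iφ} sin θ), s₂ = (−e^{−iφ} sin θ, cos θ) in ℂ², and σ = λ s₁s₁† + (1−λ) s₂s₂†. Then the root fidelity satisfies F(ρ,σ) := tr[ √( √ρ · σ · √ρ ) ] = F₊ + F₋, where F_± = ½ √( 1 + k² cos 2θ ± 2k cos θ · √(1 − k² sin²θ) ); consequently the Bures angle is 𝓛(ρ,σ) = arccos(F₊ + F₋). -/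
/-!
With `M = √ρ σ √ρ` we have `tr M = tr (ρ σ)` and `det M = det ρ · det σ = (λ (1 - λ))²`.
A positive semidefinite `2 × 2` matrix `B` satisfies `(tr B)² = tr (B²) + 2 det B` with
`tr B, det B ≥ 0`, so `tr √M = √(tr M + 2 √(det M))`, which works out to `√(1 - k² sin² θ)`.
The radicands of `F±` are `(√(1 - k² sin² θ) ± k cos θ)²` and `|k cos θ| ≤ √(1 - k² sin² θ)`,
so `F₊ + F₋` is the same number.
-/

open Matrix ComplexOrder

noncomputable section

/-- The positive semidefinite square root of a positive semidefinite matrix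
(the definition removed from Mathlib, restored with its old meaning). -/
def Matrix.PosSemidef.sqrt {n 𝕜 : Type*} [Fintype n] [RCLike 𝕜] [DecidableEq n]
    {A : Matrix n n 𝕜} (hA : A.PosSemidef) : Matrix n n 𝕜 :=
  (hA.1.eigenvectorUnitary : Matrix n n 𝕜) *
    diagonal (fun i => ((Real.sqrt (hA.1.eigenvalues i) : ℝ) : 𝕜)) *
    (star hA.1.eigenvectorUnitary : Matrix n n 𝕜)

open scoped MatrixOrder

namespace Matrix

section RCLike

variable {n 𝕜 : Type*} [Fintype n] [RCLike 𝕜] [DecidableEq n]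

lemma PosSemidef.sqrt_eq_cfcSqrt {A : Matrix n n 𝕜} (hA : A.PosSemidef) :
    hA.sqrt = CFC.sqrt A := by
  rw [CFC.sqrt_eq_real_sqrt A hA.nonneg, cfcₙ_eq_cfc, hA.1.cfc_eq]
  simp [Matrix.PosSemidef.sqrt, Matrix.IsHermitian.cfc, Unitary.conjStarAlgAut_apply,
    Function.comp_def]

lemma PosSemidef.sqrt_mul_self {A : Matrix n n 𝕜} (hA : A.PosSemidef) :
    hA.sqrt * hA.sqrt = A := by
  rw [hA.sqrt_eq_cfcSqrt]
  exact CFC.sqrt_mul_sqrt_self A hA.nonneg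

lemma PosSemidef.trace_sqrt_mul_mul_sqrt {ρ : Matrix n n 𝕜} (hρ : ρ.PosSemidef)
    (σ : Matrix n n 𝕜) : (hρ.sqrt * σ * hρ.sqrt).trace = (ρ * σ).trace := by
  rw [trace_mul_comm, ← Matrix.mul_assoc, hρ.sqrt_mul_self]

lemma PosSemidef.det_sqrt_mul_mul_sqrt {ρ : Matrix n n 𝕜} (hρ : ρ.PosSemidef)
    (σ : Matrix n n 𝕜) : (hρ.sqrt * σ * hρ.sqrt).det = ρ.det * σ.det := by
  rw [det_mul, det_mul, mul_right_comm, ← det_mul, hρ.sqrt_mul_self]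

end RCLike

lemma trace_sq_fin_two {R : Type*} [CommRing R] (B : Matrix (Fin 2) (Fin 2) R) :
    B.trace ^ 2 = (B * B).trace + 2 * B.det := by
  simp only [trace_fin_two, det_fin_two, mul_apply, Fin.sum_univ_two]
  ring

lemma PosSemidef.trace_sqrt_fin_two {𝕜 : Type*} [RCLike 𝕜] {A : Matrix (Fin 2) (Fin 2) 𝕜}
    (hA : A.PosSemidef) :
    hA.sqrt.trace = (√(RCLike.re A.trace + 2 * √(RCLike.re A.det)) : 𝕜) := by
  have hB : hA.sqrt.PosSemidef := by
    rw [hA.sqrt_eq_cfcSqrt]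
    exact (CFC.sqrt_nonneg A).posSemidef
  obtain ⟨t, ht, htr⟩ := RCLike.nonneg_iff_exists_ofReal.mp hB.trace_nonneg
  have hsq : (t : 𝕜) ^ 2 = A.trace + 2 * (√(RCLike.re A.det) : 𝕜) := by
    rw [htr, trace_sq_fin_two, hA.sqrt_mul_self, hA.sqrt_eq_cfcSqrt, hA.det_sqrt,
      RCLike.sqrt_of_nonneg hA.det_nonneg]
  have hsq_re : t ^ 2 = RCLike.re A.trace + 2 * √(RCLike.re A.det) := by
    simpa using congrArg RCLike.re hsq
  rw [← htr, ← hsq_re, Real.sqrt_sq ht]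

end Matrix

open Real in
def qubitMixture (l θ φ : ℝ) : Matrix (Fin 2) (Fin 2) ℂ :=
  !![((l * cos θ ^ 2 + (1 - l) * sin θ ^ 2 : ℝ) : ℂ),
    -(((1 - 2 * l) * (cos θ * sin θ) : ℝ) : ℂ) * Complex.exp (-(Complex.I * φ));
    -(((1 - 2 * l) * (cos θ * sin θ) : ℝ) : ℂ) * Complex.exp (Complex.I * φ),
    ((l * sin θ ^ 2 + (1 - l) * cos θ ^ 2 : ℝ) : ℂ)]

open Real in
lemma eq_qubitMixture (l θ φ : ℝ) (s₁ s₂ : Fin 2 → ℂ) (σ : Matrix (Fin 2) (Fin 2) ℂ)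
    (hs₁ : s₁ = ![(cos θ : ℂ), Complex.exp (Complex.I * φ) * sin θ])
    (hs₂ : s₂ = ![-(Complex.exp (-(Complex.I * φ))) * sin θ, (cos θ : ℂ)])
    (hσ : σ = (l : ℂ) • vecMulVec s₁ (star s₁) + ((1 - l : ℝ) : ℂ) • vecMulVec s₂ (star s₂)) :
    σ = qubitMixture l θ φ := by
  have hexp : Complex.exp (Complex.I * φ) * Complex.exp (-(Complex.I * φ)) = 1 := by
    rw [← Complex.exp_add, add_neg_cancel, Complex.exp_zero]
  subst hσ hs₁ hs₂
  ext i j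
  fin_cases i <;> fin_cases j <;>
    simp only [Matrix.add_apply, Matrix.smul_apply, vecMulVec_apply] <;>
    simp [qubitMixture, ← Complex.exp_conj, ← Complex.cos_conj, ← Complex.sin_conj]
  · linear_combination (1 - (l : ℂ)) * Complex.sin θ ^ 2 * hexp
  · ring
  · ring
  · linear_combination (l : ℂ) * Complex.sin θ ^ 2 * hexp

lemma sqrt_sq_add_sqrt_sq_of_abs_le {a g : ℝ} (h : |a| ≤ g) :
    √((g + a) ^ 2) + √((g - a) ^ 2) = 2 * g := by
  obtain ⟨h₁, h₂⟩ := abs_le.mp h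
  rw [Real.sqrt_sq (by linarith), Real.sqrt_sq (by linarith)]
  ring

open Real in
lemma half_sqrt_add_half_sqrt_eq {k : ℝ} (θ : ℝ) (hk : k ^ 2 ≤ 1) :
    1 / 2 * √(1 + k ^ 2 * cos (2 * θ) + 2 * k * cos θ * √(1 - k ^ 2 * sin θ ^ 2))
      + 1 / 2 * √(1 + k ^ 2 * cos (2 * θ) - 2 * k * cos θ * √(1 - k ^ 2 * sin θ ^ 2))
      = √(1 - k ^ 2 * sin θ ^ 2) := by
  set g := √(1 - k ^ 2 * sin θ ^ 2)
  have hg : g ^ 2 = 1 - k ^ 2 * sin θ ^ 2 :=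
    Real.sq_sqrt (by nlinarith [sin_sq_le_one θ])
  have habs : |k * cos θ| ≤ g := Real.abs_le_sqrt (by nlinarith [sin_sq_add_cos_sq θ])
  have hp : 1 + k ^ 2 * cos (2 * θ) + 2 * k * cos θ * g = (g + k * cos θ) ^ 2 := by
    rw [cos_two_mul]
    linear_combination k ^ 2 * sin_sq_add_cos_sq θ - hg
  have hm : 1 + k ^ 2 * cos (2 * θ) - 2 * k * cos θ * g = (g - k * cos θ) ^ 2 := by
    rw [cos_two_mul]
    linear_combination k ^ 2 * sin_sq_add_cos_sq θ - hg
  rw [hp, hm, ← mul_add, sqrt_sq_add_sqrt_sq_of_abs_le habs]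
  ring

open Real in
lemma trace_mul_qubitMixture_add_two_sqrt_det {l : ℝ} (hl : l ∈ Set.Icc (0 : ℝ) 1) (θ φ : ℝ)
    {ρ : Matrix (Fin 2) (Fin 2) ℂ} (hρ : ρ = !![(l : ℂ), 0; 0, ((1 - l : ℝ) : ℂ)]) :
    (ρ * qubitMixture l θ φ).trace.re + 2 * √(ρ.det * (qubitMixture l θ φ).det).re
      = 1 - (1 - 2 * l) ^ 2 * sin θ ^ 2 := by
  obtain ⟨hl₀, hl₁⟩ := hl
  have hexp : Complex.exp (-(Complex.I * φ)) * Complex.exp (Complex.I * φ) = 1 := by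
    rw [← Complex.exp_add, neg_add_cancel, Complex.exp_zero]
  have hdet : ρ.det * (qubitMixture l θ φ).det = ((l * (1 - l)) ^ 2 : ℝ) := by
    rw [hρ, qubitMixture, det_fin_two_of, det_fin_two_of]
    push_cast
    linear_combination
      (-(l : ℂ) * (1 - l) * ((1 - 2 * l) * (Complex.cos θ * Complex.sin θ)) ^ 2) * hexp
      + (l : ℂ) ^ 2 * (1 - l) ^ 2 * (Complex.sin θ ^ 2 + Complex.cos θ ^ 2 + 1)
        * Complex.sin_sq_add_cos_sq θ
  have htr : (ρ * qubitMixture l θ φ).trace = ((l * (l * cos θ ^ 2 + (1 - l) * sin θ ^ 2)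
      + (1 - l) * (l * sin θ ^ 2 + (1 - l) * cos θ ^ 2) : ℝ) : ℂ) := by
    rw [hρ, qubitMixture]
    simp [trace_fin_two]
  rw [hdet, htr, Complex.ofReal_re, Complex.ofReal_re, Real.sqrt_sq (by nlinarith)]
  linear_combination (l ^ 2 + (1 - l) ^ 2) * sin_sq_add_cos_sq θ

theorem qubit_root_fidelity_analytic_general (l θ φ : ℝ)
    (hl : l ∈ Set.Icc (0 : ℝ) 1)
    (k : ℝ) (hk : k = 1 - 2 * l)
    (ρ σ : Matrix (Fin 2) (Fin 2) ℂ)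
    (s₁ s₂ : Fin 2 → ℂ)
    (hs₁ : s₁ = ![(Real.cos θ : ℂ), Complex.exp (Complex.I * φ) * Real.sin θ])
    (hs₂ : s₂ = ![-(Complex.exp (-(Complex.I * φ))) * Real.sin θ, (Real.cos θ : ℂ)])
    (hρ : ρ = !![(l : ℂ), 0; 0, ((1 - l : ℝ) : ℂ)])
    (hσ : σ = (l : ℂ) • vecMulVec s₁ (star s₁)
        + ((1 - l : ℝ) : ℂ) • vecMulVec s₂ (star s₂))
    (Fp Fm : ℝ)
    (hFp : Fp = (1 / 2) * Real.sqrt (1 + k ^ 2 * Real.cos (2 * θ)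
        + 2 * k * Real.cos θ * Real.sqrt (1 - k ^ 2 * Real.sin θ ^ 2)))
    (hFm : Fm = (1 / 2) * Real.sqrt (1 + k ^ 2 * Real.cos (2 * θ)
        - 2 * k * Real.cos θ * Real.sqrt (1 - k ^ 2 * Real.sin θ ^ 2)))
    (hρpsd : ρ.PosSemidef)
    (hmid : (hρpsd.sqrt * σ * hρpsd.sqrt).PosSemidef) :
    hmid.sqrt.trace = ((Fp + Fm : ℝ) : ℂ) ∧
    Real.arccos (hmid.sqrt.trace.re) = Real.arccos (Fp + Fm) := by
  have htr : hmid.sqrt.trace = (√(1 - k ^ 2 * Real.sin θ ^ 2) : ℂ) := by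
    rw [hmid.trace_sqrt_fin_two, hρpsd.trace_sqrt_mul_mul_sqrt, hρpsd.det_sqrt_mul_mul_sqrt,
      RCLike.re_to_complex, RCLike.re_to_complex, eq_qubitMixture l θ φ s₁ s₂ σ hs₁ hs₂ hσ,
      trace_mul_qubitMixture_add_two_sqrt_det hl θ φ hρ, hk]
    rfl
  have hk2 : k ^ 2 ≤ 1 := by
    obtain ⟨hl₀, hl₁⟩ := hl
    nlinarith
  have hF : Fp + Fm = √(1 - k ^ 2 * Real.sin θ ^ 2) := by
    rw [hFp, hFm, half_sqrt_add_half_sqrt_eq θ hk2]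
  rw [htr, hF, Complex.ofReal_re]
  exact ⟨rfl, rfl⟩

theorem qubit_root_fidelity_analytic (l θ φ : ℝ)
    (hl : l ∈ Set.Icc (0 : ℝ) 1)
    (hθ : θ ∈ Set.Icc (0 : ℝ) (Real.pi / 2))
    (k : ℝ) (hk : k = 1 - 2 * l)
    (ρ σ : Matrix (Fin 2) (Fin 2) ℂ)
    (s₁ s₂ : Fin 2 → ℂ)
    (hs₁ : s₁ = ![(Real.cos θ : ℂ), Complex.exp (Complex.I * φ) * Real.sin θ])
    (hs₂ : s₂ = ![-(Complex.exp (-(Complex.I * φ))) * Real.sin θ, (Real.cos θ : ℂ)])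
    (hρ : ρ = !![(l : ℂ), 0; 0, ((1 - l : ℝ) : ℂ)])
    (hσ : σ = (l : ℂ) • vecMulVec s₁ (star s₁)
        + ((1 - l : ℝ) : ℂ) • vecMulVec s₂ (star s₂))
    (Fp Fm : ℝ)
    (hFp : Fp = (1 / 2) * Real.sqrt (1 + k ^ 2 * Real.cos (2 * θ)
        + 2 * k * Real.cos θ * Real.sqrt (1 - k ^ 2 * Real.sin θ ^ 2)))
    (hFm : Fm = (1 / 2) * Real.sqrt (1 + k ^ 2 * Real.cos (2 * θ)
        - 2 * k * Real.cos θ * Real.sqrt (1 - k ^ 2 * Real.sin θ ^ 2)))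
    (hρpsd : ρ.PosSemidef)
    (hmid : (hρpsd.sqrt * σ * hρpsd.sqrt).PosSemidef) :
    hmid.sqrt.trace = ((Fp + Fm : ℝ) : ℂ) ∧
    Real.arccos (hmid.sqrt.trace.re) = Real.arccos (Fp + Fm) :=
  qubit_root_fidelity_analytic_general l θ φ hl k hk ρ σ s₁ s₂ hs₁ hs₂ hρ hσ Fp Fm hFp hFm hρpsd
    hmid
end
end

section
/- Fix λ ∈ (0,1), θ ∈ (0, π/2], and set k = 1 − 2λ. Then F₊ + F₋ > cos θ, where F_± = ½ √( 1 + k² cos 2θ ± 2k cos θ · √(1 − k² sin²θ) ). Equivalently, for genuinely mixed qubit states of the family ρ = λ e₁e₁† + (1−λ) e₂e₂†, σ = λ s₁s₁† + (1−λ) s₂s₂† (with s₁ = (cos θ, e^{iφ} sin θ), s₂ = (−e^{−iφ} sin θ, cos θ)), the Bures angle 𝓛(ρ,σ) = arccos(F₊ + F₋) is strictly smaller than θ = Θ(ρ,σ)/2, so the Bures-angle speed limit of Eq. (1) is unattainable for all mixed qubit states (λ ≠ 0, 1). -/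
set_option maxHeartbeats 1000000 in


theorem root_fidelity_gt_cos_theta (l θ : ℝ)
    (hl : l ∈ Set.Ioo (0 : ℝ) 1)
    (hθ : θ ∈ Set.Ioc (0 : ℝ) (Real.pi / 2))
    (k : ℝ) (hk : k = 1 - 2 * l)
    (Fp Fm : ℝ)
    (hFp : Fp = (1 / 2) * Real.sqrt (1 + k ^ 2 * Real.cos (2 * θ)
        + 2 * k * Real.cos θ * Real.sqrt (1 - k ^ 2 * Real.sin θ ^ 2)))
    (hFm : Fm = (1 / 2) * Real.sqrt (1 + k ^ 2 * Real.cos (2 * θ)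
        - 2 * k * Real.cos θ * Real.sqrt (1 - k ^ 2 * Real.sin θ ^ 2))) :
    Real.cos θ < Fp + Fm := by
  obtain ⟨hl0, hl1⟩ := hl
  obtain ⟨hθ0, hθ1⟩ := hθ
  have hpi := Real.pi_pos
  have hk1 : -1 < k := by nlinarith
  have hk2 : k < 1 := by nlinarith
  have hk2' : k ^ 2 < 1 := by nlinarith
  have hs : 0 < Real.sin θ := Real.sin_pos_of_pos_of_lt_pi hθ0 (by nlinarith)
  have hs1 : Real.sin θ ≤ 1 := Real.sin_le_one θ
  have hc : 0 ≤ Real.cos θ := Real.cos_nonneg_of_mem_Icc ⟨by linarith, hθ1⟩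
  set s := Real.sin θ with hsdef
  set c := Real.cos θ with hcdef
  have hcs : c ^ 2 = 1 - s ^ 2 := by
    have h := Real.sin_sq_add_cos_sq θ
    nlinarith [h]
  have hR0 : (0:ℝ) < 1 - k ^ 2 * s ^ 2 := by nlinarith
  set R := Real.sqrt (1 - k ^ 2 * s ^ 2) with hRdef
  have hRnn : 0 ≤ R := Real.sqrt_nonneg _
  have hR2 : R ^ 2 = 1 - k ^ 2 * s ^ 2 := Real.sq_sqrt hR0.le
  have hcos2 : Real.cos (2 * θ) = 1 - 2 * s ^ 2 := by
    rw [Real.cos_two_mul]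
    rw [← hcdef]
    nlinarith [hcs]
  obtain ⟨A, hAdef⟩ : ∃ A : ℝ, A = 1 + k ^ 2 * (1 - 2 * s ^ 2) := ⟨_, rfl⟩
  obtain ⟨B, hBdef⟩ : ∃ B : ℝ, B = 2 * k * c * R := ⟨_, rfl⟩
  have hFp' : Fp = (1 / 2) * Real.sqrt (A + B) := by
    rw [hFp, hcos2, ← hAdef, ← hBdef]
  have hFm' : Fm = (1 / 2) * Real.sqrt (A - B) := by
    rw [hFm, hcos2, ← hAdef, ← hBdef]
  have hB2 : B ^ 2 = 4 * k ^ 2 * (1 - s ^ 2) * (1 - k ^ 2 * s ^ 2) := by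
    have h : B ^ 2 = 4 * k ^ 2 * c ^ 2 * R ^ 2 := by rw [hBdef]; ring
    rw [h, hR2, hcs]
  have hAB : A ^ 2 - B ^ 2 = (1 - k ^ 2) ^ 2 := by
    rw [hAdef]; linear_combination (-1 : ℝ) * hB2
  have hApos : (0:ℝ) < A := by rw [hAdef]; nlinarith
  have hBA : |B| ≤ A := by
    have h : B ^ 2 ≤ A ^ 2 := by linarith [hAB, sq_nonneg (1 - k ^ 2)]
    calc |B| = Real.sqrt (B ^ 2) := (Real.sqrt_sq_eq_abs B).symm
      _ ≤ Real.sqrt (A ^ 2) := Real.sqrt_le_sqrt h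
      _ = A := Real.sqrt_sq hApos.le
  obtain ⟨hBA1, hBA2⟩ := abs_le.mp hBA
  have hABp : 0 ≤ A + B := by linarith
  have hABm : 0 ≤ A - B := by linarith
  have hFpsq : Fp ^ 2 = (A + B) / 4 := by
    rw [hFp', mul_pow, Real.sq_sqrt hABp]; ring
  have hFmsq : Fm ^ 2 = (A - B) / 4 := by
    rw [hFm', mul_pow, Real.sq_sqrt hABm]; ring
  have hprod : Fp * Fm = (1 - k ^ 2) / 4 := by
    rw [hFp', hFm']
    have h1 : Real.sqrt (A + B) * Real.sqrt (A - B) = Real.sqrt ((A + B) * (A - B)) :=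
      (Real.sqrt_mul hABp _).symm
    have h2 : (A + B) * (A - B) = (1 - k ^ 2) ^ 2 := by linear_combination hAB
    have h3 : Real.sqrt ((1 - k ^ 2) ^ 2) = 1 - k ^ 2 := Real.sqrt_sq (by linarith)
    calc (1 / 2) * Real.sqrt (A + B) * ((1 / 2) * Real.sqrt (A - B))
        = (1 / 4) * (Real.sqrt (A + B) * Real.sqrt (A - B)) := by ring
      _ = (1 / 4) * Real.sqrt ((A + B) * (A - B)) := by rw [h1]
      _ = (1 - k ^ 2) / 4 := by rw [h2, h3]; ring
  have hsum_sq : (Fp + Fm) ^ 2 = 1 - k ^ 2 * s ^ 2 := by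
    have : (Fp + Fm) ^ 2 = Fp ^ 2 + 2 * (Fp * Fm) + Fm ^ 2 := by ring
    rw [this, hFpsq, hFmsq, hprod, hAdef]; ring
  have hFpnn : 0 ≤ Fp := by rw [hFp']; positivity
  have hFmnn : 0 ≤ Fm := by rw [hFm']; positivity
  refine lt_of_pow_lt_pow_left₀ 2 (by linarith) ?_
  rw [hsum_sq, hcs]
  have hss : 0 < s ^ 2 := by positivity
  have hlt := mul_lt_mul_of_pos_right hk2' hss
  linarith
end
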